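/- arXiv:2004.10843 — 6 statements merged into one kernel-verified Lean document; each statement's English description precedes it below -/
import Mathlib

section
/- In X = [0,1]^ω with the product topology, for every y ∈ X whose support supp_0(y) = {n : y(n) ≠ 0} is infinite, the set H^y = {x ∈ X : x > y} is nowhere dense, where x > y means x(n) ≥ y(n) for all n with strict inequality at some coordinate. -/
open Set

/-- In `X = [0,1]^ω` with the product topology, if `y` has infinite support
`{n : y n ≠ 0}`, then `H^y = {x : x > y}` is nowhere dense. -/
theorem nowhereDense_upper_set_of_infinite_support
    (y : ℕ → unitInterval) (hy : {n | y n ≠ 0}.Infinite) :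
    IsNowhereDense {x : ℕ → unitInterval | (∀ n, y n ≤ x n) ∧ ∃ n, y n < x n} := by
  set U : Set (ℕ → unitInterval) := {x | ∀ n, y n ≤ x n} with hU
  have hUclosed : IsClosed U := by
    have : U = ⋂ n, {x : ℕ → unitInterval | y n ≤ x n} := by
      ext x; simp [hU]
    rw [this]
    exact isClosed_iInter fun n => isClosed_le continuous_const (continuous_apply n)
  have hsub : closure {x : ℕ → unitInterval | (∀ n, y n ≤ x n) ∧ ∃ n, y n < x n} ⊆ U :=
    closure_minimal (fun x hx => hx.1) hUclosed
  unfold IsNowhereDense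
  have hint : interior U = ∅ := by
    by_contra h
    obtain ⟨x, hx⟩ := nonempty_iff_ne_empty.mpr h
    have hmem : U ∈ nhds x := mem_interior_iff_mem_nhds.mp hx
    rw [nhds_pi, Filter.mem_pi] at hmem
    obtain ⟨I, hIfin, t, ht, hts⟩ := hmem
    obtain ⟨n, hn⟩ := (hy.diff hIfin).nonempty
    have hnI : n ∉ I := hn.2
    have hn : y n ≠ 0 := hn.1
    have hx' : Function.update x n 0 ∈ I.pi t := by
      intro i hi
      rw [Function.update_of_ne (by rintro rfl; exact hnI hi)]
      exact mem_of_mem_nhds (ht i)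
    have := hts hx' n
    rw [Function.update_self] at this
    exact hn (le_antisymm this (y n).2.1)
  exact eq_empty_of_subset_empty (hint ▸ interior_mono hsub)
end

section
/- Let X = [0,1]^ω and let ⊳ be the Suppes–Sen relation: x ⊳ y iff there is a finite permutation π of ω with f_π(x) > y, and x ∼ y iff there is a finite permutation π with f_π(x) = y. Then the set S' = {(x,y) ∈ X × X : x ⊳ y or y ⊳ x or x ∼ y} is meager in X × X. -/
open Set

/-- A finite permutation of ω: a bijection moving only finitely many points. -/
def FinitePerm (π : Equiv.Perm ℕ) : Prop := {n | π n ≠ n}.Finite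

/-- The Suppes–Sen strict relation on `[0,1]^ω`:
`x ⊳ y` iff some finite permutation of `x` pointwise dominates `y` with strict
inequality somewhere. -/
def SuppesSenGT (x y : ℕ → unitInterval) : Prop :=
  ∃ π : Equiv.Perm ℕ, FinitePerm π ∧
    (∀ n, y n ≤ x (π n)) ∧ ∃ n, y n < x (π n)

/-- The Suppes–Sen equivalence: `x ∼ y` iff some finite permutation of `x` equals `y`. -/
def SuppesSenEq (x y : ℕ → unitInterval) : Prop :=
  ∃ π : Equiv.Perm ℕ, FinitePerm π ∧ ∀ n, x (π n) = y n

/-- The "eventual domination" set. -/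
def Dset (N : ℕ) : Set ((ℕ → unitInterval) × (ℕ → unitInterval)) :=
  {p | ∀ n, N ≤ n → p.2 n ≤ p.1 n}

lemma Dset_closed (N : ℕ) : IsClosed (Dset N) := by
  have : Dset N = ⋂ n ∈ {n | N ≤ n}, {p : (ℕ → unitInterval) × (ℕ → unitInterval) | p.2 n ≤ p.1 n} := by
    ext p; simp [Dset]
  rw [this]
  refine isClosed_biInter fun n _ => ?_
  exact isClosed_le ((continuous_apply n).comp continuous_snd)
    ((continuous_apply n).comp continuous_fst)

lemma Dset_interior (N : ℕ) : interior (Dset N) = ∅ := by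
  by_contra h
  obtain ⟨⟨x, y⟩, hp⟩ := nonempty_iff_ne_empty.mpr h
  obtain ⟨u, v, hu, hv, hxu, hyv, huv⟩ :=
    isOpen_prod_iff.mp isOpen_interior x y hp
  obtain ⟨I, w, hw, hIw⟩ := isOpen_pi_iff.mp hu x hxu
  obtain ⟨J, z, hz, hJz⟩ := isOpen_pi_iff.mp hv y hyv
  -- pick m ≥ N outside I ∪ J
  obtain ⟨m, hmN, hmI, hmJ⟩ : ∃ m, N ≤ m ∧ m ∉ I ∧ m ∉ J := by
    obtain ⟨b, hb⟩ := (I ∪ J).bddAbove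
    refine ⟨max N (b + 1), le_max_left _ _, fun hm => ?_, fun hm => ?_⟩
    · have := hb (Finset.mem_union_left _ hm)
      omega
    · have := hb (Finset.mem_union_right _ hm)
      omega
  set x' := Function.update x m 0 with hx'
  set y' := Function.update y m 1 with hy'
  have hx'u : x' ∈ u := by
    apply hIw
    intro a ha
    have : x' a = x a := Function.update_of_ne (fun h : a = m => hmI (h ▸ ha)) _ _
    rw [this]; exact (hw a ha).2
  have hy'v : y' ∈ v := by
    apply hJz
    intro a ha
    have : y' a = y a := Function.update_of_ne (fun h : a = m => hmJ (h ▸ ha)) _ _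
    rw [this]; exact (hz a ha).2
  have hmem : (x', y') ∈ Dset N := interior_subset (huv ⟨hx'u, hy'v⟩)
  have := hmem m hmN
  simp only [hx', hy', Function.update_self] at this
  exact absurd this (by norm_num [unitInterval])

lemma Dset_meagre (N : ℕ) : IsMeagre (Dset N) := by
  rw [IsMeagre]
  exact residual_of_dense_open (Dset_closed N).isOpen_compl
    (interior_eq_empty_iff_dense_compl.mp (Dset_interior N))

/-- The set of pairs comparable (or equivalent) under the Suppes–Sen relation is
meager in `X × X`, where `X = [0,1]^ω`. -/
theorem suppesSen_comparable_meager :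
    IsMeagre {p : (ℕ → unitInterval) × (ℕ → unitInterval) |
      SuppesSenGT p.1 p.2 ∨ SuppesSenGT p.2 p.1 ∨ SuppesSenEq p.1 p.2} := by
  have key : ∀ (π : Equiv.Perm ℕ), FinitePerm π → ∃ N, ∀ n, N ≤ n → π n = n := by
    intro π hπ
    obtain ⟨b, hb⟩ := hπ.bddAbove
    exact ⟨b + 1, fun n hn => by
      by_contra hne
      exact absurd (hb hne) (by omega)⟩
  have hmeagre : IsMeagre (⋃ N, Dset N ∪ Prod.swap ⁻¹' Dset N) := by
    refine isMeagre_iUnion fun N => ?_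
    have h1 := Dset_meagre N
    have h2 : IsMeagre (Prod.swap ⁻¹' Dset N :
        Set ((ℕ → unitInterval) × (ℕ → unitInterval))) :=
      h1.preimage_of_isOpenMap continuous_swap ((Homeomorph.prodComm _ _).isOpenMap)
    rw [IsMeagre, compl_union]
    exact Filter.inter_mem h1 h2
  refine hmeagre.mono ?_
  rintro ⟨x, y⟩ h
  simp only [mem_setOf_eq] at h
  simp only [mem_iUnion, mem_union, mem_preimage]
  rcases h with ⟨π, hπ, hle, -⟩ | ⟨π, hπ, hle, -⟩ | ⟨π, hπ, heq⟩
  · obtain ⟨N, hN⟩ := key π hπ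
    exact ⟨N, Or.inl fun n hn => by have := hle n; rwa [hN n hn] at this⟩
  · obtain ⟨N, hN⟩ := key π hπ
    exact ⟨N, Or.inr fun n hn => by have := hle n; rwa [hN n hn] at this⟩
  · obtain ⟨N, hN⟩ := key π hπ
    exact ⟨N, Or.inl fun n hn => by have := heq n; rw [hN n hn] at this; exact this.ge⟩
end

section
/- Let X = [0,1]^ω and let ≾ be a SWR on X satisfying anonymity and strong Pareto. Set E = {(x,y) : x ≻ y} and D = {(x,y) : y ≻ x}. If both E and D have the Baire property in X × X, then E ∪ D is meager. -/
open Set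

/-- A set has the Baire property iff it differs from an open set by a meager set. -/
def HasBaireProperty {α : Type*} [TopologicalSpace α] (s : Set α) : Prop :=
  ∃ u : Set α, IsOpen u ∧ IsMeagre (symmDiff s u)

/-- Anonymity: swapping two coordinates yields an equivalent stream. -/
def Anonymity {Y : Type*} (r : (ℕ → Y) → (ℕ → Y) → Prop) : Prop :=
  ∀ x y : ℕ → Y,
    (∃ i j : ℕ, y i = x j ∧ y j = x i ∧ ∀ k, k ≠ i → k ≠ j → y k = x k) →
    (r x y ∧ r y x)

/-- Strong Pareto. -/
def StrongPareto {Y : Type*} [Preorder Y] (r : (ℕ → Y) → (ℕ → Y) → Prop) : Prop :=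
  ∀ x y : ℕ → Y, (∀ n, x n ≤ y n) → (∃ i, x i < y i) → (r x y ∧ ¬ r y x)

namespace SwrAux

abbrev XX : Type := ℕ → unitInterval

/-- The "block swap" permutation: exchanges positions `[0,n)` with `[m, m+n)` (for `n ≤ m`). -/
def bs (n m : ℕ) : ℕ → ℕ := fun k =>
  if k < n then k + m else if m ≤ k ∧ k < m + n then k - m else k

lemma bs_inv {n m : ℕ} (h : n ≤ m) : Function.Involutive (bs n m) := by
  intro k
  unfold bs
  split_ifs <;> omega

lemma meagre_union {α : Type*} [TopologicalSpace α] {s t : Set α}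
    (hs : IsMeagre s) (ht : IsMeagre t) : IsMeagre (s ∪ t) := by
  have h : sᶜ ∩ tᶜ ∈ residual α := Filter.inter_mem hs ht
  rwa [← Set.compl_union] at h

lemma cont_comp (f : ℕ → ℕ) : Continuous (fun x : XX => x ∘ f) :=
  continuous_pi fun i => continuous_apply (f i)

/-- The homeomorphism of `X × X` given by reindexing both coordinates by an involution. -/
def phiH (f : ℕ → ℕ) (hf : Function.Involutive f) : (XX × XX) ≃ₜ (XX × XX) where
  toFun p := (p.1 ∘ f, p.2 ∘ f)
  invFun p := (p.1 ∘ f, p.2 ∘ f)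
  left_inv p := by
    refine Prod.ext (funext fun i => ?_) (funext fun i => ?_) <;>
      simp [Function.comp, hf i]
  right_inv p := by
    refine Prod.ext (funext fun i => ?_) (funext fun i => ?_) <;>
      simp [Function.comp, hf i]
  continuous_toFun :=
    ((cont_comp f).comp continuous_fst).prodMk ((cont_comp f).comp continuous_snd)
  continuous_invFun :=
    ((cont_comp f).comp continuous_fst).prodMk ((cont_comp f).comp continuous_snd)

lemma phiH_apply (f : ℕ → ℕ) (hf : Function.Involutive f) (p : XX × XX) :
    phiH f hf p = (p.1 ∘ f, p.2 ∘ f) := rfl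

/-- Partial block swap, used to build a chain of single swaps. -/
def sw (x : XX) (m k : ℕ) : XX := fun i =>
  if i < k then x (i + m) else if m ≤ i ∧ i < m + k then x (i - m) else x i

lemma sw_zero (x : XX) (m : ℕ) : sw x m 0 = x := by
  funext i; simp [sw]

lemma r_comp_bs (r : XX → XX → Prop) (hrefl : Reflexive r) (htrans : Transitive r)
    (hA : Anonymity r) {n m : ℕ} (h : n ≤ m) (x : XX) :
    r x (x ∘ bs n m) ∧ r (x ∘ bs n m) x := by
  have key : ∀ k, k ≤ m → r x (sw x m k) ∧ r (sw x m k) x := by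
    intro k
    induction k with
    | zero => intro _; rw [sw_zero]; exact ⟨hrefl x, hrefl x⟩
    | succ k ih =>
      intro hk
      obtain ⟨h1, h2⟩ := ih (by omega)
      have hstep := hA (sw x m k) (sw x m (k + 1)) ⟨k, k + m, ?_, ?_, ?_⟩
      · exact ⟨htrans h1 hstep.1, htrans hstep.2 h2⟩
      · -- sw x m (k+1) k = sw x m k (k+m)
        show (if k < k + 1 then x (k + m) else _) =
          (if k + m < k then x (k + m + m) else if m ≤ k + m ∧ k + m < m + k then x (k + m - m) else x (k + m))
        rw [if_pos (by omega), if_neg (by omega), if_neg (by omega)]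
      · -- sw x m (k+1) (k+m) = sw x m k k
        show (if k + m < k + 1 then x (k + m + m) else if m ≤ k + m ∧ k + m < m + (k+1) then x (k + m - m) else x (k + m)) =
          (if k < k then x (k + m) else if m ≤ k ∧ k < m + k then x (k - m) else x k)
        rw [if_neg (by omega), if_pos (by omega), if_neg (by omega), if_neg (by omega)]
        exact congrArg x (by omega)
      · intro i hik hikm
        show (if i < k + 1 then x (i + m) else if m ≤ i ∧ i < m + (k+1) then x (i - m) else x i) =
          (if i < k then x (i + m) else if m ≤ i ∧ i < m + k then x (i - m) else x i)
        have hik' : i ≠ k := hik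
        have hikm' : i ≠ k + m := hikm
        split_ifs <;> first | rfl | omega
  have hco : x ∘ bs n m = sw x m n := by
    funext i
    show x (bs n m i) = _
    unfold bs sw
    split_ifs <;> rfl
  rw [hco]
  exact key n h

lemma r_iff (r : XX → XX → Prop) (hrefl : Reflexive r) (htrans : Transitive r)
    (hA : Anonymity r) {n m : ℕ} (h : n ≤ m) (a b : XX) :
    r a b ↔ r (a ∘ bs n m) (b ∘ bs n m) := by
  obtain ⟨ha1, ha2⟩ := r_comp_bs r hrefl htrans hA h a
  obtain ⟨hb1, hb2⟩ := r_comp_bs r hrefl htrans hA h b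
  exact ⟨fun hab => htrans ha2 (htrans hab hb1), fun hab => htrans ha1 (htrans hab hb2)⟩

lemma exists_box {W : Set (XX × XX)} (hW : IsOpen W) {p : XX × XX} (hp : p ∈ W) :
    ∃ (N : ℕ) (u v : ℕ → Set unitInterval),
      (∀ i, IsOpen (u i)) ∧ (∀ i, IsOpen (v i)) ∧ (∀ i, p.1 i ∈ u i) ∧ (∀ i, p.2 i ∈ v i) ∧
      ∀ q : XX × XX, (∀ i < N, q.1 i ∈ u i) → (∀ i < N, q.2 i ∈ v i) → q ∈ W := by
  obtain ⟨U1, U2, hU1, hU2, hp1, hp2, hsub⟩ :=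
    isOpen_prod_iff.mp hW p.1 p.2 (by simpa using hp)
  obtain ⟨I1, u1, hu1, hsub1⟩ := isOpen_pi_iff.mp hU1 p.1 hp1
  obtain ⟨I2, u2, hu2, hsub2⟩ := isOpen_pi_iff.mp hU2 p.2 hp2
  refine ⟨I1.sup id + I2.sup id + 1,
    (fun i => if i ∈ I1 then u1 i else Set.univ),
    (fun i => if i ∈ I2 then u2 i else Set.univ), ?_, ?_, ?_, ?_, ?_⟩
  · intro i; dsimp only; split_ifs with hi
    · exact (hu1 i hi).1
    · exact isOpen_univ
  · intro i; dsimp only; split_ifs with hi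
    · exact (hu2 i hi).1
    · exact isOpen_univ
  · intro i; dsimp only; split_ifs with hi
    · exact (hu1 i hi).2
    · trivial
  · intro i; dsimp only; split_ifs with hi
    · exact (hu2 i hi).2
    · trivial
  · intro q h1 h2
    have hq1 : q.1 ∈ U1 := by
      apply hsub1
      intro i hi
      have hiN : i < I1.sup id + I2.sup id + 1 := by
        have := Finset.le_sup (f := id) hi
        simp only [id] at this
        omega
      have := h1 i hiN
      rw [Finset.mem_coe] at hi
      simpa only [if_pos hi] using this
    have hq2 : q.2 ∈ U2 := by
      apply hsub2
      intro i hi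
      have hiN : i < I1.sup id + I2.sup id + 1 := by
        have := Finset.le_sup (f := id) hi
        simp only [id] at this
        omega
      have := h2 i hiN
      rw [Finset.mem_coe] at hi
      simpa only [if_pos hi] using this
    have : (q.1, q.2) ∈ U1 ×ˢ U2 := ⟨hq1, hq2⟩
    simpa using hsub this

lemma zero_one (S : Set (XX × XX)) (hBP : HasBaireProperty S)
    (hinv : ∀ n m : ℕ, n ≤ m →
      (fun p : XX × XX => (p.1 ∘ bs n m, p.2 ∘ bs n m)) ⁻¹' S = S) :
    IsMeagre S ∨ IsMeagre Sᶜ := by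
  obtain ⟨U, hUo, hM⟩ := hBP
  rcases Set.eq_empty_or_nonempty U with hU | ⟨p, hp⟩
  · left
    apply hM.mono
    subst hU
    intro z hz
    simp [Set.symmDiff_def, hz]
  · right
    obtain ⟨N, u, v, huo, hvo, hpu, hpv, hbox⟩ := exists_box hUo hp
    let Φ : ℕ → (XX × XX) ≃ₜ (XX × XX) :=
      fun m => phiH (bs N (N + m)) (bs_inv (Nat.le_add_right N m))
    let B : Set (XX × XX) := {q | (∀ i < N, q.1 i ∈ u i) ∧ ∀ i < N, q.2 i ∈ v i}
    have hBo : IsOpen B := by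
      have h1 : B = (⋂ i ∈ Finset.range N, ((fun q : XX × XX => q.1 i) ⁻¹' u i)) ∩
          (⋂ i ∈ Finset.range N, ((fun q : XX × XX => q.2 i) ⁻¹' v i)) := by
        ext q
        simp only [B, Set.mem_setOf_eq, Set.mem_inter_iff, Set.mem_iInter, Set.mem_preimage,
          Finset.mem_range]
      rw [h1]
      exact (isOpen_biInter_finset fun i _ =>
          (huo i).preimage ((continuous_apply i).comp continuous_fst)).inter
        (isOpen_biInter_finset fun i _ =>
          (hvo i).preimage ((continuous_apply i).comp continuous_snd))
    have hBU : B ⊆ U := fun q hq => hbox q hq.1 hq.2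
    have hGopen : IsOpen (⋃ m, ⇑(Φ m) ⁻¹' B) :=
      isOpen_iUnion fun m => hBo.preimage (Φ m).continuous
    have hGdense : Dense (⋃ m, ⇑(Φ m) ⁻¹' B) := by
      rw [dense_iff_inter_open]
      rintro W hWo ⟨q, hq⟩
      obtain ⟨M, u', v', _, _, hqu, hqv, hbox'⟩ := exists_box hWo hq
      set z : XX × XX :=
        (fun j => if N + M ≤ j ∧ j < N + M + N then p.1 (j - (N + M)) else q.1 j,
         fun j => if N + M ≤ j ∧ j < N + M + N then p.2 (j - (N + M)) else q.2 j) with hz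
      refine ⟨z, ?_, Set.mem_iUnion.mpr ⟨M, ?_⟩⟩
      · apply hbox'
        · intro i hi
          show (if N + M ≤ i ∧ i < N + M + N then p.1 (i - (N + M)) else q.1 i) ∈ u' i
          rw [if_neg (by omega)]
          exact hqu i
        · intro i hi
          show (if N + M ≤ i ∧ i < N + M + N then p.2 (i - (N + M)) else q.2 i) ∈ v' i
          rw [if_neg (by omega)]
          exact hqv i
      · show Φ M z ∈ B
        rw [phiH_apply]
        constructor <;> intro i hi
        · show z.1 (bs N (N + M) i) ∈ u i
          have hb : bs N (N + M) i = i + (N + M) := by unfold bs; rw [if_pos hi]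
          rw [hb]
          show (if N + M ≤ i + (N + M) ∧ i + (N + M) < N + M + N then p.1 (i + (N + M) - (N + M))
            else q.1 (i + (N + M))) ∈ u i
          rw [if_pos (by omega)]
          have harg : i + (N + M) - (N + M) = i := by omega
          rw [harg]
          exact hpu i
        · show z.2 (bs N (N + M) i) ∈ v i
          have hb : bs N (N + M) i = i + (N + M) := by unfold bs; rw [if_pos hi]
          rw [hb]
          show (if N + M ≤ i + (N + M) ∧ i + (N + M) < N + M + N then p.2 (i + (N + M) - (N + M))
            else q.2 (i + (N + M))) ∈ v i
          rw [if_pos (by omega)]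
          have harg : i + (N + M) - (N + M) = i := by omega
          rw [harg]
          exact hpv i
    have hmeag : ∀ m, IsMeagre (⇑(Φ m) ⁻¹' B \ S) := by
      intro m
      have hS : ⇑(Φ m) ⁻¹' S = S := hinv N (N + m) (Nat.le_add_right N m)
      have h2 : ⇑(Φ m) ⁻¹' B \ S = ⇑(Φ m) ⁻¹' (B \ S) := by
        rw [Set.preimage_diff, hS]
      rw [h2]
      refine (hM.mono ?_).preimage_of_isOpenMap (Φ m).continuous (Φ m).isOpenMap
      intro w hw
      rw [Set.symmDiff_def]
      exact Or.inr ⟨hBU hw.1, hw.2⟩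
    have hcover : Sᶜ ⊆ (⋃ m, ⇑(Φ m) ⁻¹' B)ᶜ ∪ ⋃ m, (⇑(Φ m) ⁻¹' B \ S) := by
      intro w hw
      by_cases hwB : w ∈ ⋃ m, ⇑(Φ m) ⁻¹' B
      · right
        obtain ⟨m, hm⟩ := Set.mem_iUnion.mp hwB
        exact Set.mem_iUnion.mpr ⟨m, hm, hw⟩
      · left; exact hwB
    have hcompl : IsMeagre (⋃ m, ⇑(Φ m) ⁻¹' B)ᶜ := by
      show (⋃ m, ⇑(Φ m) ⁻¹' B)ᶜᶜ ∈ residual _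
      rw [compl_compl]
      exact residual_of_dense_open hGopen hGdense
    exact (meagre_union hcompl (isMeagre_iUnion hmeag)).mono hcover

end SwrAux

open SwrAux in
/-- If `≾` is a SWR on `[0,1]^ω` satisfying anonymity and strong Pareto, and both
`E = {(x,y) : x ≻ y}` and `D = {(x,y) : y ≻ x}` have the Baire property, then
`E ∪ D` is meager. -/
theorem swr_baire_implies_meager
    (r : (ℕ → unitInterval) → (ℕ → unitInterval) → Prop)
    (hrefl : Reflexive r) (htrans : Transitive r)
    (hA : Anonymity r) (hSP : StrongPareto r)
    (E : Set ((ℕ → unitInterval) × (ℕ → unitInterval)))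
    (D : Set ((ℕ → unitInterval) × (ℕ → unitInterval)))
    (hE : E = {p | r p.2 p.1 ∧ ¬ r p.1 p.2})
    (hD : D = {p | r p.1 p.2 ∧ ¬ r p.2 p.1})
    (hEB : HasBaireProperty E) (hDB : HasBaireProperty D) :
    IsMeagre (E ∪ D) := by
  have hswap : D = Prod.swap ⁻¹' E := by rw [hE, hD]; rfl
  have hinv : ∀ n m : ℕ, n ≤ m →
      (fun p : XX × XX => (p.1 ∘ bs n m, p.2 ∘ bs n m)) ⁻¹' E = E := by
    intro n m h
    ext p
    simp only [hE, Set.mem_preimage, Set.mem_setOf_eq]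
    rw [← r_iff r hrefl htrans hA h p.2 p.1, ← r_iff r hrefl htrans hA h p.1 p.2]
  have hswapOpen : IsOpenMap (Prod.swap : XX × XX → XX × XX) :=
    (Homeomorph.prodComm XX XX).isOpenMap
  rcases zero_one E hEB hinv with hEm | hEc
  · have hDm : IsMeagre D := by
      rw [hswap]
      exact hEm.preimage_of_isOpenMap continuous_swap hswapOpen
    exact meagre_union hEm hDm
  · exfalso
    have hEr : E ∈ residual (XX × XX) := by
      have h : Eᶜᶜ ∈ residual (XX × XX) := hEc
      rwa [compl_compl] at h
    have hDc : IsMeagre Dᶜ := by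
      rw [hswap, ← Set.preimage_compl]
      exact hEc.preimage_of_isOpenMap continuous_swap hswapOpen
    have hDr : D ∈ residual (XX × XX) := by
      have h : Dᶜᶜ ∈ residual (XX × XX) := hDc
      rwa [compl_compl] at h
    obtain ⟨z, hz⟩ := (dense_of_mem_residual (Filter.inter_mem hEr hDr)).nonempty
    rw [hE] at hz
    have hz1 := hz.1
    have hz2 := hz.2
    rw [hD] at hz2
    exact hz1.2 hz2.1
end

section
/- Let X = [0,1]^ω and let ≾ be a total SWR on X satisfying anonymity and strong Pareto. Then at least one of the sets E = {(x,y) : x ≻ y}, D = {(x,y) : y ≻ x} fails to have the Baire property in X × X. -/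
open Set

/-!
Anonymity makes the set of strictly preferred pairs invariant under finitely supported
permutations of the coordinates of `(ℕ → I) × (ℕ → I) ≃ₜ (ℕ → I × I)`, so by the topological
zero–one law for such sets it is meagre or comeagre. Flipping the pair maps it onto a disjoint
set, so if it has the Baire property it is meagre. If both strict sets were meagre, the
indifference set `A` would be comeagre by totality. Let `φ` apply `t ↦ √t` to coordinate `0`;
then `(x, y)` and `(φ x, y)` both lie in `A` for comeagre many pairs, in particular for one with
`x 0 ∈ (0, 1)`, so `φ x ∼ x`, while strong Pareto gives `φ x ≻ x`.
-/

open Equiv Filter Topology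

theorem hasBaireProperty_iff_baireMeasurableSet {α : Type*} [TopologicalSpace α] {s : Set α} :
    HasBaireProperty s ↔ BaireMeasurableSet s := by
  rw [BaireMeasurableSet.iff_residualEq_isOpen]
  refine exists_congr fun u => and_congr_right fun _ => ?_
  rw [IsMeagre, compl_symmDiff, eventuallyEq_set]
  exact Iff.of_eq (congrArg (· ∈ residual α) (Set.ext fun _ => Set.mem_bihimp_iff))

theorem comp_mem_iff_of_mem_closure_isSwap {α Z : Type*} [DecidableEq α] {s : Set (α → Z)}
    (hs : ∀ i j (x : α → Z), x ∘ swap i j ∈ s ↔ x ∈ s) {σ : Perm α}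
    (hσ : σ ∈ Subgroup.closure {τ : Perm α | τ.IsSwap}) (x : α → Z) : x ∘ σ ∈ s ↔ x ∈ s := by
  induction hσ using Subgroup.closure_induction generalizing x with
  | mem τ hτ => obtain ⟨i, j, -, rfl⟩ := hτ; exact hs i j x
  | one => rfl
  | mul σ τ _ _ hσ hτ => rw [Perm.coe_mul, ← Function.comp_assoc, hτ, hσ]
  | inv σ _ hσ => rw [← hσ, Function.comp_assoc, Perm.inv_def, symm_comp_self]; rfl

def blockSwap (M : ℕ) : Perm ℕ :=
  Function.Involutive.toPerm (fun i => if i < M then i + M else if i < 2 * M then i - M else i)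
    fun i => by dsimp only; split_ifs <;> omega

theorem blockSwap_apply (M i : ℕ) :
    blockSwap M i = if i < M then i + M else if i < 2 * M then i - M else i :=
  rfl

theorem blockSwap_apply_of_lt {M i : ℕ} (h : i < M) : blockSwap M i = i + M := if_pos h

theorem blockSwap_mem_closure_isSwap (M : ℕ) :
    blockSwap M ∈ Subgroup.closure {σ : Perm ℕ | σ.IsSwap} := by
  refine mem_closure_isSwap'.2 <| (finite_Iio (2 * M)).subset fun i hi => ?_
  rw [mem_compl_iff, MulAction.mem_fixedBy, Perm.smul_def, blockSwap_apply] at hi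
  rw [mem_Iio]
  split_ifs at hi <;> omega

section ZeroOneLaw

variable {Z : Type*} [TopologicalSpace Z]

theorem exists_comp_blockSwap_mem {U V : Set (ℕ → Z)} (hU : IsOpen U) (hV : IsOpen V)
    (hUne : U.Nonempty) (hVne : V.Nonempty) : ∃ M, ∃ y ∈ V, y ∘ blockSwap M ∈ U := by
  obtain ⟨p, hp⟩ := hUne
  obtain ⟨q, hq⟩ := hVne
  obtain ⟨I, u, hu, hIU⟩ := isOpen_pi_iff.1 hU p hp
  obtain ⟨J, v, hv, hJV⟩ := isOpen_pi_iff.1 hV q hq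
  obtain ⟨M, hM⟩ := (I ∪ J).exists_nat_subset_range
  have hlt : ∀ i ∈ I ∪ J, i < M := fun i hi => Finset.mem_range.1 (hM hi)
  refine ⟨M, fun j => if j < M then q j else p (j - M), hJV fun j hj => ?_, hIU fun i hi => ?_⟩
  · have := hlt j (Finset.mem_union_right _ hj)
    simpa [this] using (hv j hj).2
  · have := hlt i (Finset.mem_union_left _ hi)
    simpa [blockSwap_apply_of_lt this] using (hu i hi).2

-- `s` is comeagre in the open set `u`, hence in each of its translates by block swaps, and
-- these translates cover a dense open set.
theorem isMeagre_or_isMeagre_compl_of_forall_swap {s : Set (ℕ → Z)} (hs : BaireMeasurableSet s)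
    (hinv : ∀ i j (x : ℕ → Z), x ∘ swap i j ∈ s ↔ x ∈ s) : IsMeagre s ∨ IsMeagre sᶜ := by
  obtain ⟨u, hu, hsu⟩ := hs.residualEq_isOpen
  rcases u.eq_empty_or_nonempty with rfl | hune
  · exact .inl (eventuallyEq_empty.1 hsu)
  right
  let T (M : ℕ) := (Homeomorph.piCongrLeft (Y := fun _ => Z) (blockSwap M)).symm
  have hsT (M : ℕ) (x : ℕ → Z) : T M x ∈ s ↔ x ∈ s :=
    comp_mem_iff_of_mem_closure_isSwap hinv (blockSwap_mem_closure_isSwap M) x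
  have hus : IsMeagre (u ∩ sᶜ) := by
    filter_upwards [eventuallyEq_set.1 hsu] with x hx ⟨hxu, hxs⟩ using hxs (hx.2 hxu)
  have hW : (⋃ M, T M ⁻¹' u) ∈ residual (ℕ → Z) := by
    refine residual_of_dense_open (isOpen_iUnion fun M => hu.preimage (T M).continuous) ?_
    refine dense_iff_inter_open.2 fun V hV hVne => ?_
    obtain ⟨M, y, hyV, hyu⟩ := exists_comp_blockSwap_mem hu hV hune hVne
    exact ⟨y, hyV, mem_iUnion.2 ⟨M, hyu⟩⟩
  have hbad : IsMeagre (⋃ M, T M ⁻¹' (u ∩ sᶜ)) :=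
    isMeagre_iUnion fun M => hus.preimage_of_isOpenMap (T M).continuous (T M).isOpenMap
  rw [IsMeagre, compl_compl]
  filter_upwards [hW, hbad] with x hxW hx
  obtain ⟨M, hxM⟩ := mem_iUnion.1 hxW
  by_contra hxs
  exact hx (mem_iUnion.2 ⟨M, hxM, (hsT M x).not.2 hxs⟩)

end ZeroOneLaw

theorem isMeagre_or_isMeagre_compl_of_forall_swap_prod {Y : Type*} [TopologicalSpace Y]
    {s : Set ((ℕ → Y) × (ℕ → Y))} (hs : BaireMeasurableSet s)
    (hinv : ∀ i j (p : (ℕ → Y) × (ℕ → Y)), (p.1 ∘ swap i j, p.2 ∘ swap i j) ∈ s ↔ p ∈ s) :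
    IsMeagre s ∨ IsMeagre sᶜ := by
  let e : (ℕ → Y × Y) ≃ₜ (ℕ → Y) × (ℕ → Y) :=
    { Equiv.arrowProdEquivProdArrow _ _ _ with
      continuous_toFun := by dsimp [Equiv.arrowProdEquivProdArrow]; fun_prop
      continuous_invFun := by dsimp [Equiv.arrowProdEquivProdArrow]; fun_prop }
  have key := isMeagre_or_isMeagre_compl_of_forall_swap (hs.preimage e.continuous e.isOpenMap)
    fun i j x => hinv i j (e x)
  refine key.imp ?_ ?_ <;> intro h <;>
    simpa [preimage_preimage] using h.preimage_of_isOpenMap e.symm.continuous e.symm.isOpenMap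

section SocialWelfare

variable {Y : Type*} {r : (ℕ → Y) → (ℕ → Y) → Prop}

theorem Anonymity.comp_swap (hA : Anonymity r) (x : ℕ → Y) (i j : ℕ) :
    r x (x ∘ swap i j) ∧ r (x ∘ swap i j) x :=
  hA x _ ⟨i, j, by simp, by simp, fun k hi hj => by simp [swap_apply_of_ne_of_ne hi hj]⟩

theorem Anonymity.flip (hA : Anonymity r) : Anonymity (flip r) := fun x y h => (hA x y h).symm

theorem strict_comp_swap_iff (htrans : Transitive r) (hA : Anonymity r) (i j : ℕ)
    (p : (ℕ → Y) × (ℕ → Y)) :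
    (r (p.1 ∘ swap i j) (p.2 ∘ swap i j) ∧ ¬ r (p.2 ∘ swap i j) (p.1 ∘ swap i j)) ↔
      (r p.1 p.2 ∧ ¬ r p.2 p.1) := by
  obtain ⟨h₁, h₁'⟩ := hA.comp_swap p.1 i j
  obtain ⟨h₂, h₂'⟩ := hA.comp_swap p.2 i j
  exact ⟨fun ⟨h, h'⟩ => ⟨htrans h₁ (htrans h h₂'), fun h'' => h' (htrans h₂' (htrans h'' h₁))⟩,
    fun ⟨h, h'⟩ => ⟨htrans h₁' (htrans h h₂), fun h'' => h' (htrans h₂ (htrans h'' h₁'))⟩⟩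

theorem isMeagre_setOf_strict_of_baireMeasurableSet [TopologicalSpace Y] [Nonempty Y]
    [BaireSpace ((ℕ → Y) × (ℕ → Y))] (htrans : Transitive r) (hA : Anonymity r)
    (hs : BaireMeasurableSet {p : (ℕ → Y) × (ℕ → Y) | r p.1 p.2 ∧ ¬ r p.2 p.1}) :
    IsMeagre {p : (ℕ → Y) × (ℕ → Y) | r p.1 p.2 ∧ ¬ r p.2 p.1} := by
  refine (isMeagre_or_isMeagre_compl_of_forall_swap_prod hs
    (strict_comp_swap_iff htrans hA)).resolve_right fun hc => ?_
  have hc' := hc.preimage_of_isOpenMap continuous_swap (Homeomorph.prodComm _ _).isOpenMap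
  refine not_isMeagre_of_isOpen isOpen_univ univ_nonempty ((hc.union hc').mono fun p _ => ?_)
  by_contra h
  simp only [mem_union, mem_compl_iff, mem_preimage, mem_ofPred_eq, not_or,
    not_not, Prod.fst_swap, Prod.snd_swap] at h
  exact h.1.2 h.2.1

end SocialWelfare

namespace unitInterval

noncomputable def sqrtHomeomorph : I ≃ₜ I where
  toFun t := ⟨√t, Real.sqrt_nonneg _, Real.sqrt_le_one.2 t.2.2⟩
  invFun t := ⟨t ^ 2, sq_nonneg _, pow_le_one₀ t.2.1 t.2.2⟩
  left_inv t := Subtype.ext (Real.sq_sqrt t.2.1)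
  right_inv t := Subtype.ext (Real.sqrt_sq t.2.1)
  continuous_toFun := by fun_prop
  continuous_invFun := by fun_prop

theorem le_sqrtHomeomorph (t : I) : t ≤ sqrtHomeomorph t := by
  show (t : ℝ) ≤ √t
  rw [Real.le_sqrt t.2.1 t.2.1]
  nlinarith [t.2.1, t.2.2]

theorem lt_sqrtHomeomorph {t : I} (h₀ : 0 < t) (h₁ : t < 1) : t < sqrtHomeomorph t := by
  show (t : ℝ) < √t
  rw [Real.lt_sqrt t.2.1]
  nlinarith [show (0 : ℝ) < t from h₀, show (t : ℝ) < 1 from h₁]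

end unitInterval

open unitInterval in
theorem setOf_indifferent_notMem_residual {r : (ℕ → I) → (ℕ → I) → Prop} (htrans : Transitive r)
    (hSP : StrongPareto r) :
    {p : (ℕ → I) × (ℕ → I) | r p.1 p.2 ∧ r p.2 p.1} ∉ residual ((ℕ → I) × (ℕ → I)) := by
  intro hres
  let φ : (ℕ → I) ≃ₜ (ℕ → I) :=
    Homeomorph.piCongrRight fun n => if n = 0 then sqrtHomeomorph else .refl I
  have hφ (x : ℕ → I) (h₀ : 0 < x 0) (h₁ : x 0 < 1) : ¬ r (φ x) x := by
    refine (hSP x (φ x) (fun n => ?_) ⟨0, lt_sqrtHomeomorph h₀ h₁⟩).2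
    show x n ≤ (if n = 0 then sqrtHomeomorph else .refl I) (x n)
    split_ifs
    exacts [le_sqrtHomeomorph _, le_rfl]
  let Φ : (ℕ → I) × (ℕ → I) ≃ₜ (ℕ → I) × (ℕ → I) := φ.prodCongr (.refl _)
  have hres' := inter_mem hres (tendsto_residual_of_isOpenMap Φ.continuous Φ.isOpenMap hres)
  obtain ⟨c, hc⟩ := exists_between (zero_lt_one' I)
  obtain ⟨p, ⟨hp₀, hp₁⟩, ⟨-, hp⟩, hΦp⟩ := (dense_of_mem_residual hres').inter_open_nonempty
    {p | p.1 0 ∈ Ioo 0 1} (isOpen_Ioo.preimage (by fun_prop)) ⟨(fun _ => c, fun _ => c), hc⟩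
  exact hφ p.1 hp₀ hp₁ (htrans hΦp.1 hp)

theorem total_swr_non_baire_general
    (r : (ℕ → unitInterval) → (ℕ → unitInterval) → Prop)
    (htrans : Transitive r)
    (htotal : ∀ x y, r x y ∨ r y x)
    (hA : Anonymity r) (hSP : StrongPareto r) :
    ¬ HasBaireProperty {p : (ℕ → unitInterval) × (ℕ → unitInterval) |
        r p.2 p.1 ∧ ¬ r p.1 p.2} ∨
    ¬ HasBaireProperty {p : (ℕ → unitInterval) × (ℕ → unitInterval) |
        r p.1 p.2 ∧ ¬ r p.2 p.1} := by
  rw [← not_and_or, hasBaireProperty_iff_baireMeasurableSet,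
    hasBaireProperty_iff_baireMeasurableSet]
  rintro ⟨hE, hD⟩
  have hE' := isMeagre_setOf_strict_of_baireMeasurableSet (r := flip r)
    (fun _ _ _ h₁ h₂ => htrans h₂ h₁) hA.flip hE
  have hD' := isMeagre_setOf_strict_of_baireMeasurableSet htrans hA hD
  refine setOf_indifferent_notMem_residual htrans hSP
    (mem_of_superset (hE'.union hD') fun p hp => ?_)
  simp only [mem_compl_iff, mem_union, mem_ofPred_eq, flip, not_or, not_and, not_not] at hp
  rcases htotal p.1 p.2 with h | h
  exacts [⟨h, hp.2 h⟩, ⟨hp.1 h, h⟩]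

/-- If `≾` is a *total* SWR on `[0,1]^ω` satisfying anonymity and strong Pareto,
then `E = {(x,y) : x ≻ y}` or `D = {(x,y) : y ≻ x}` fails to have the Baire
property in `X × X`. -/
theorem total_swr_non_baire
    (r : (ℕ → unitInterval) → (ℕ → unitInterval) → Prop)
    (hrefl : Reflexive r) (htrans : Transitive r)
    (htotal : ∀ x y, r x y ∨ r y x)
    (hA : Anonymity r) (hSP : StrongPareto r) :
    ¬ HasBaireProperty {p : (ℕ → unitInterval) × (ℕ → unitInterval) |
        r p.2 p.1 ∧ ¬ r p.1 p.2} ∨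
    ¬ HasBaireProperty {p : (ℕ → unitInterval) × (ℕ → unitInterval) |
        r p.1 p.2 ∧ ¬ r p.2 p.1} :=
  total_swr_non_baire_general r htrans htotal hA hSP
end

section
/- Let X = 2^ω and let ≾ be a total SWR on X satisfying anonymity and strong Pareto. Then at least one of E = {(x,y) : x ≻ y}, D = {(x,y) : y ≻ x} fails to have the Baire property in 2^ω × 2^ω. -/
open Set

namespace SWRAux

abbrev XX := ℕ → Bool

/-- Cylinder set. -/
def Cyl (s : ℕ → Bool) (n : ℕ) : Set XX := {x | ∀ i < n, x i = s i}

lemma self_mem_cyl (s : ℕ → Bool) (n : ℕ) : s ∈ Cyl s n := fun _ _ => rfl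

lemma cyl_mono {s : ℕ → Bool} {n m : ℕ} (h : n ≤ m) : Cyl s m ⊆ Cyl s n :=
  fun _ hx i hi => hx i (lt_of_lt_of_le hi h)

lemma isOpen_cyl (s : ℕ → Bool) (n : ℕ) : IsOpen (Cyl s n) := by
  have : Cyl s n = ⋂ i ∈ Finset.range n, (fun x : XX => x i) ⁻¹' {s i} := by
    ext x; simp [Cyl]
  rw [this]
  exact isOpen_biInter_finset fun i _ => (isOpen_discrete {s i}).preimage (continuous_apply i)

lemma exists_cyl_subset {U : Set XX} (hU : IsOpen U) {x : XX} (hx : x ∈ U) :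
    ∃ n, Cyl x n ⊆ U := by
  obtain ⟨I, u, h1, h2⟩ := isOpen_pi_iff.mp hU x hx
  refine ⟨(I.sup id) + 1, fun y hy => h2 fun a ha => ?_⟩
  have : a < I.sup id + 1 := Nat.lt_succ_of_le (Finset.le_sup (f := id) ha)
  rw [hy a this]
  exact (h1 a ha).2

/-- The homeomorphism of `2^ω` induced by a permutation of coordinates. -/
def act (e : ℕ ≃ ℕ) : XX ≃ₜ XX where
  toFun x := x ∘ e
  invFun x := x ∘ e.symm
  left_inv x := by funext i; simp
  right_inv x := by funext i; simp
  continuous_toFun := continuous_pi fun i => continuous_apply (e i)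
  continuous_invFun := continuous_pi fun i => continuous_apply (e.symm i)

/-- Block permutation: composition of the transpositions `(i, N+i)` for `i < k`. -/
def bp (N : ℕ) : ℕ → (ℕ ≃ ℕ)
  | 0 => Equiv.refl ℕ
  | k + 1 => (bp N k).trans (Equiv.swap k (N + k))

lemma bp_spec (N : ℕ) : ∀ k, k ≤ N →
    (∀ i, i < k → bp N k i = N + i) ∧ (∀ j, k ≤ j → j < N → bp N k j = j) := by
  intro k
  induction k with
  | zero => exact fun _ => ⟨fun i hi => absurd hi (Nat.not_lt_zero i), fun j _ _ => rfl⟩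
  | succ k ih =>
    intro hk
    obtain ⟨h1, h2⟩ := ih (Nat.le_of_succ_le hk)
    constructor
    · intro i hi
      rcases Nat.lt_succ_iff_lt_or_eq.mp hi with hi | hi
      · have : bp N (k+1) i = Equiv.swap k (N+k) (bp N k i) := rfl
        rw [this, h1 i hi, Equiv.swap_apply_of_ne_of_ne] <;> omega
      · have hb : bp N (k+1) i = Equiv.swap k (N+k) (bp N k i) := rfl
        rw [hb, hi, h2 k le_rfl (by omega), Equiv.swap_apply_left]
    · intro j hj1 hj2
      have : bp N (k+1) j = Equiv.swap k (N+k) (bp N k j) := rfl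
      rw [this, h2 j (by omega) hj2, Equiv.swap_apply_of_ne_of_ne] <;> omega

/-- Invariance of a set of pairs under simultaneous coordinate swaps. -/
def SwapInv (A : Set (XX × XX)) : Prop :=
  ∀ (i j : ℕ) (x y : XX), (x, y) ∈ A → (x ∘ Equiv.swap i j, y ∘ Equiv.swap i j) ∈ A

lemma swapInv_bp {A : Set (XX × XX)} (hA : SwapInv A) (N : ℕ) :
    ∀ k (x y : XX), (x, y) ∈ A → (x ∘ (bp N k), y ∘ (bp N k)) ∈ A := by
  intro k
  induction k with
  | zero => intro x y h; simpa [bp] using h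
  | succ k ih =>
    intro x y h
    have h1 := hA k (N + k) x y h
    have h2 := ih _ _ h1
    have e1 : (x ∘ ⇑(Equiv.swap k (N+k))) ∘ ⇑(bp N k) = x ∘ ⇑(bp N (k+1)) := by
      funext i; simp [bp, Function.comp]
    have e2 : (y ∘ ⇑(Equiv.swap k (N+k))) ∘ ⇑(bp N k) = y ∘ ⇑(bp N (k+1)) := by
      funext i; simp [bp, Function.comp]
    rw [e1, e2] at h2
    exact h2

lemma open_not_meagre {α : Type*} [TopologicalSpace α] [BaireSpace α] {U : Set α}
    (hU : IsOpen U) (hne : U.Nonempty) : ¬ IsMeagre U := by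
  intro h
  have hd : Dense Uᶜ := dense_of_mem_residual h
  have hc : closure Uᶜ = Uᶜ := hU.isClosed_compl.closure_eq
  have : Uᶜ = univ := by rw [← hc]; exact hd.closure_eq
  obtain ⟨x, hx⟩ := hne
  exact absurd (this ▸ mem_univ x) (by simp [hx])

lemma meagre_union {α : Type*} [TopologicalSpace α] {s t : Set α}
    (hs : IsMeagre s) (ht : IsMeagre t) : IsMeagre (s ∪ t) := by
  rw [IsMeagre, compl_union]; exact Filter.inter_mem hs ht

lemma isMeagre_frontier_of_isOpen {α : Type*} [TopologicalSpace α] {V : Set α}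
    (hV : IsOpen V) : IsMeagre (frontier V) := by
  rw [IsMeagre]
  refine residual_of_dense_open isClosed_frontier.isOpen_compl ?_
  rw [← interior_eq_empty_iff_dense_compl, ← frontier_compl]
  exact interior_frontier hV.isClosed_compl

-- need act, bp etc: assume imported from t2 content; here redeclare minimal for test
lemma exists_box_subset {W : Set (XX × XX)} (hW : IsOpen W) (hne : W.Nonempty) :
    ∃ (s t : ℕ → Bool) (m : ℕ), Cyl s m ×ˢ Cyl t m ⊆ W := by
  obtain ⟨⟨a, b⟩, hab⟩ := hne
  obtain ⟨u, v, hu, hv, hau, hbv, huv⟩ := isOpen_prod_iff.mp hW a b hab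
  obtain ⟨n1, h1⟩ := exists_cyl_subset hu hau
  obtain ⟨n2, h2⟩ := exists_cyl_subset hv hbv
  exact ⟨a, b, max n1 n2, fun p hp => huv
    ⟨h1 (cyl_mono (le_max_left _ _) hp.1), h2 (cyl_mono (le_max_right _ _) hp.2)⟩⟩

lemma zero_one_law {A : Set (XX × XX)} (hBP : HasBaireProperty A) (hInv : SwapInv A) :
    IsMeagre A ∨ IsMeagre Aᶜ := by
  by_contra hcon
  push_neg at hcon
  obtain ⟨hA, hAc⟩ := hcon
  obtain ⟨V, hVopen, hM⟩ := hBP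
  set M := symmDiff A V with hMdef
  have hAV : A \ V ⊆ M := fun p hp => Or.inl hp
  have hVA : V \ A ⊆ M := fun p hp => Or.inr hp
  have hAsub : A ⊆ V ∪ M := fun p hp => by
    by_cases h : p ∈ V
    · exact Or.inl h
    · exact Or.inr (hAV ⟨hp, h⟩)
  have hVsub : V \ M ⊆ A := fun p hp => by
    by_contra h
    exact hp.2 (hVA ⟨hp.1, h⟩)
  -- V is nonempty
  have hVne : V.Nonempty := by
    rcases eq_empty_or_nonempty V with h | h
    · exact absurd (hM.mono (by rw [h] at hAsub; simpa using hAsub)) hA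
    · exact h
  obtain ⟨a, b, m, hB0⟩ := exists_box_subset hVopen hVne
  -- the complement
  set W := interior Vᶜ with hWdef
  set M₂ := M ∪ frontier V with hM2def
  have hM2 : IsMeagre M₂ := meagre_union hM (isMeagre_frontier_of_isOpen hVopen)
  have hVcW : Vᶜ ⊆ W ∪ frontier V := by
    intro p hp
    by_cases h : p ∈ W
    · exact Or.inl h
    · refine Or.inr ⟨?_, ?_⟩
      · rw [closure_eq_compl_interior_compl]; exact h
      · exact fun hin => hp (interior_subset hin)
  have hAcsub : Aᶜ ⊆ W ∪ M₂ := by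
    intro p hp
    by_cases h : p ∈ V
    · by_cases h2 : p ∈ M
      · exact Or.inr (Or.inl h2)
      · exact absurd (hVsub ⟨h, h2⟩) hp
    · rcases hVcW h with h | h
      · exact Or.inl h
      · exact Or.inr (Or.inr h)
  have hWsub : W \ M₂ ⊆ Aᶜ := by
    intro p hp hpA
    rcases hAsub hpA with h | h
    · exact (interior_subset hp.1 : (p : XX × XX) ∈ Vᶜ) h
    · exact hp.2 (Or.inl h)
  have hWne : W.Nonempty := by
    rcases eq_empty_or_nonempty W with h | h
    · refine absurd (hM2.mono ?_) hAc
      intro p hp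
      rcases hAcsub hp with h' | h'
      · rw [h] at h'; exact absurd h' (notMem_empty p)
      · exact h'
    · exact h
  obtain ⟨t, t', k, hB1⟩ := exists_box_subset isOpen_interior hWne
  -- construct the block-swap homeomorphism
  set N := max m k with hNdef
  have hkN : k ≤ N := le_max_right m k
  have hmN : m ≤ N := le_max_left m k
  set e := bp N k with hedef
  obtain ⟨hbp1, _⟩ := bp_spec N k hkN
  set s₁ : ℕ → Bool := fun i => if i < m then a i else
    if N ≤ i ∧ i < N + k then t (i - N) else false with hs1
  set u₁ : ℕ → Bool := fun i => if i < m then b i else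
    if N ≤ i ∧ i < N + k then t' (i - N) else false with hu1
  set B₀' : Set (XX × XX) := Cyl s₁ (N + k) ×ˢ Cyl u₁ (N + k) with hB0'
  have hB0'V : B₀' ⊆ V := by
    refine subset_trans ?_ hB0
    intro p hp
    constructor
    · intro i hi
      rw [hp.1 i (by omega)]
      simp only [hs1, if_pos hi]
    · intro i hi
      rw [hp.2 i (by omega)]
      simp only [hu1, if_pos hi]
  set H : (XX × XX) ≃ₜ (XX × XX) := (act e).prodCongr (act e) with hHdef
  have hHimg : ∀ p ∈ B₀', H p ∈ Cyl t k ×ˢ Cyl t' k := by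
    rintro ⟨x, y⟩ ⟨hx, hy⟩
    constructor
    · intro i hi
      show x (e i) = t i
      have h1 : x (N + i) = s₁ (N + i) := hx (N + i) (by omega)
      rw [hbp1 i hi, h1]
      simp only [hs1]
      rw [if_neg (by omega), if_pos (by omega)]
      congr 1; omega
    · intro i hi
      show y (e i) = t' i
      have h1 : y (N + i) = u₁ (N + i) := hy (N + i) (by omega)
      rw [hbp1 i hi, h1]
      simp only [hu1]
      rw [if_neg (by omega), if_pos (by omega)]
      congr 1; omega
  have hHinv : ∀ p ∈ A, H p ∈ A := by
    rintro ⟨x, y⟩ hp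
    exact swapInv_bp hInv N k x y hp
  set G := H '' B₀' with hGdef
  have hGopen : IsOpen G := H.isOpenMap _ ((isOpen_cyl _ _).prod (isOpen_cyl _ _))
  have hGne : G.Nonempty := ⟨H (s₁, u₁), ⟨(s₁, u₁), ⟨self_mem_cyl _ _, self_mem_cyl _ _⟩, rfl⟩⟩
  have hGB1 : G ⊆ W := by
    rintro q ⟨p, hp, rfl⟩
    exact hB1 (hHimg p hp)
  have hHM : IsMeagre (H '' M) := by
    rw [← Homeomorph.preimage_symm]
    exact hM.preimage_of_isOpenMap H.symm.continuous H.symm.isOpenMap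
  have hGmeagre : G ⊆ (H '' M) ∪ M₂ := by
    rintro q ⟨p, hp, rfl⟩
    by_cases h2 : H p ∈ M₂
    · exact Or.inr h2
    · by_cases hpM : p ∈ M
      · exact Or.inl ⟨p, hpM, rfl⟩
      · have hpA : p ∈ A := hVsub ⟨hB0'V hp, hpM⟩
        have : H p ∈ A := hHinv p hpA
        exact absurd this (hWsub ⟨hGB1 ⟨p, hp, rfl⟩, h2⟩)
  exact open_not_meagre hGopen hGne ((meagre_union hHM hM2).mono hGmeagre)


lemma cont_flip : Continuous (fun x : XX => fun i => if i = 0 then !(x i) else x i) :=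
  continuous_pi fun i => by
    rcases eq_or_ne i 0 with h | h
    · subst h
      simp only [if_pos rfl]
      exact (continuous_of_discreteTopology (f := Bool.not)).comp (continuous_apply 0)
    · simp only [if_neg h]
      exact continuous_apply i

/-- Flip coordinate 0. -/
def flip0 : XX ≃ₜ XX where
  toFun x := fun i => if i = 0 then !(x i) else x i
  invFun x := fun i => if i = 0 then !(x i) else x i
  left_inv x := by funext i; by_cases h : i = 0 <;> simp [h]
  right_inv x := by funext i; by_cases h : i = 0 <;> simp [h]
  continuous_toFun := cont_flip
  continuous_invFun := cont_flip

end SWRAux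

open SWRAux in
/-- If `≾` is a *total* SWR on `2^ω` satisfying anonymity and strong Pareto,
then `E = {(x,y) : x ≻ y}` or `D = {(x,y) : y ≻ x}` fails to have the Baire
property in `X × X`. -/
theorem total_swr_non_baire_bool
    (r : (ℕ → Bool) → (ℕ → Bool) → Prop)
    (hrefl : Reflexive r) (htrans : Transitive r)
    (htotal : ∀ x y, r x y ∨ r y x)
    (hA : Anonymity r) (hSP : StrongPareto r) :
    ¬ HasBaireProperty {p : (ℕ → Bool) × (ℕ → Bool) |
        r p.2 p.1 ∧ ¬ r p.1 p.2} ∨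
    ¬ HasBaireProperty {p : (ℕ → Bool) × (ℕ → Bool) |
        r p.1 p.2 ∧ ¬ r p.2 p.1} := by
  by_contra hcon
  push_neg at hcon
  obtain ⟨hE, hD⟩ := hcon
  set E : Set (XX × XX) := {p : (ℕ → Bool) × (ℕ → Bool) | r p.2 p.1 ∧ ¬ r p.1 p.2} with hEdef
  set D : Set (XX × XX) := {p : (ℕ → Bool) × (ℕ → Bool) | r p.1 p.2 ∧ ¬ r p.2 p.1} with hDdef
  have equiv_swap : ∀ (i j : ℕ) (x : XX), r x (x ∘ Equiv.swap i j) ∧ r (x ∘ Equiv.swap i j) x := by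
    intro i j x
    refine hA x (x ∘ Equiv.swap i j) ⟨i, j, ?_, ?_, fun k hk1 hk2 => ?_⟩
    · simp [Function.comp]
    · simp [Function.comp]
    · simp [Function.comp, Equiv.swap_apply_of_ne_of_ne hk1 hk2]
  have hInvE : SwapInv E := by
    rintro i j x y ⟨h1, h2⟩
    obtain ⟨hx1, hx2⟩ := equiv_swap i j x
    obtain ⟨hy1, hy2⟩ := equiv_swap i j y
    exact ⟨htrans hy2 (htrans h1 hx1), fun hc => h2 (htrans hx1 (htrans hc hy2))⟩
  have hInvD : SwapInv D := by
    rintro i j x y ⟨h1, h2⟩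
    obtain ⟨hx1, hx2⟩ := equiv_swap i j x
    obtain ⟨hy1, hy2⟩ := equiv_swap i j y
    exact ⟨htrans hx2 (htrans h1 hy1), fun hc => h2 (htrans hy1 (htrans hc hx2))⟩
  set S : (XX × XX) ≃ₜ (XX × XX) := Homeomorph.prodComm XX XX with hSdef
  have hSE : S ⁻¹' E = D := by ext ⟨x, y⟩; exact Iff.rfl
  have hSD : S ⁻¹' D = E := by ext ⟨x, y⟩; exact Iff.rfl
  have hnotboth : ¬ (IsMeagre Eᶜ ∧ IsMeagre Dᶜ) := by
    rintro ⟨h1, h2⟩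
    have hsub : (univ : Set (XX × XX)) ⊆ Eᶜ ∪ Dᶜ := by
      rintro ⟨x, y⟩ -
      by_cases hp : (x, y) ∈ E
      · exact Or.inr fun hpD => hp.2 hpD.1
      · exact Or.inl hp
    exact open_not_meagre isOpen_univ univ_nonempty ((meagre_union h1 h2).mono hsub)
  have hEm : IsMeagre E := by
    rcases zero_one_law hE hInvE with h | h
    · exact h
    · refine absurd ⟨h, ?_⟩ hnotboth
      rw [← hSE, ← preimage_compl]
      exact h.preimage_of_isOpenMap S.continuous S.isOpenMap
  have hDm : IsMeagre D := by
    rcases zero_one_law hD hInvD with h | h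
    · exact h
    · refine absurd ⟨?_, h⟩ hnotboth
      rw [← hSD, ← preimage_compl]
      exact h.preimage_of_isOpenMap S.continuous S.isOpenMap
  set F : (XX × XX) ≃ₜ (XX × XX) := (Homeomorph.refl XX).prodCongr flip0 with hFdef
  have hEDm : IsMeagre (E ∪ D) := meagre_union hEm hDm
  have hBad : IsMeagre (E ∪ D ∪ F ⁻¹' (E ∪ D)) :=
    meagre_union hEDm (hEDm.preimage_of_isOpenMap F.continuous F.isOpenMap)
  have hne : ((E ∪ D ∪ F ⁻¹' (E ∪ D))ᶜ).Nonempty := (dense_of_mem_residual hBad).nonempty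
  obtain ⟨⟨x, y⟩, hp⟩ := hne
  have hp1 : (x, y) ∉ E := fun h => hp (Or.inl (Or.inl h))
  have hp2 : (x, y) ∉ D := fun h => hp (Or.inl (Or.inr h))
  have hp3 : (x, flip0 y) ∉ E := fun h => hp (Or.inr (Or.inl h))
  have hp4 : (x, flip0 y) ∉ D := fun h => hp (Or.inr (Or.inr h))
  have hsim : ∀ u v : XX, (u, v) ∉ E → (u, v) ∉ D → r u v ∧ r v u := by
    intro u v h1 h2
    rcases htotal u v with h | h
    · exact ⟨h, by by_contra hc; exact h2 ⟨h, hc⟩⟩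
    · exact ⟨by by_contra hc; exact h1 ⟨h, hc⟩, h⟩
  obtain ⟨hxy1, hxy2⟩ := hsim x y hp1 hp2
  obtain ⟨hxf1, hxf2⟩ := hsim x (flip0 y) hp3 hp4
  have h1 : r y (flip0 y) := htrans hxy2 hxf1
  have h2 : r (flip0 y) y := htrans hxf2 hxy1
  have hflip : ∀ i, flip0 y i = if i = 0 then !(y i) else y i := fun i => rfl
  cases hy0 : y 0 with
  | false =>
    have hle : ∀ n, y n ≤ flip0 y n := by
      intro n
      rw [hflip n]
      rcases eq_or_ne n 0 with h | h
      · rw [if_pos h, h, hy0]; decide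
      · rw [if_neg h]
    have hlt : y 0 < flip0 y 0 := by
      rw [hflip 0, if_pos rfl, hy0]; decide
    exact (hSP y (flip0 y) hle ⟨0, hlt⟩).2 h2
  | true =>
    have hle : ∀ n, flip0 y n ≤ y n := by
      intro n
      rw [hflip n]
      rcases eq_or_ne n 0 with h | h
      · rw [if_pos h, h, hy0]; decide
      · rw [if_neg h]
    have hlt : flip0 y 0 < y 0 := by
      rw [hflip 0, if_pos rfl, hy0]; decide
    exact (hSP (flip0 y) y hle ⟨0, hlt⟩).2 h1
end

section
/- Let B be a complete Boolean algebra, B₁, B₂ ⋖ B complete subalgebras, φ₀ : B₁ → B₂ an isomorphism, and let Am(B,φ₀) be the amalgamation, i.e., the complete Boolean algebra generated by pairs (b′,b″) ∈ B × B with φ₀(π₁(b′)) · π₂(b″) ≠ 0 (π_j the projection B → B_j), with the product order. Then the maps e₁(b) = (b,1) and e₂(b) = (1,b) are complete embeddings of B into Am(B,φ₀). -/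
/-!
A condition of `Am` has nonzero coordinates, so `(b, 1)` and `(b', 1)` are compatible exactly
when `b ⊓ b' ≠ 0`, the witness being `(b ⊓ b', 1)`. For predensity, a maximal antichain `A`
has supremum `1`, so `b' = ⨆_{a ∈ A} b' ⊓ a`; projections onto complete subalgebras and the
isomorphism `φ₀` both commute with suprema, so `φ₀(π₁ b') ⊓ π₂ b'' ≠ 0` splits as a nonzero join
and some `(b' ⊓ a, b'')` is a condition below both `(b', b'')` and `(a, 1)`.
-/

open Set

variable {B : Type*}

/-- `S` is a complete subalgebra of the complete Boolean algebra `B`: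
closed under arbitrary suprema and complements. -/
def IsCompleteSubalgebra [CompleteBooleanAlgebra B] (S : Set B) : Prop :=
  (∀ T : Set B, T ⊆ S → sSup T ∈ S) ∧ (∀ a ∈ S, aᶜ ∈ S)

/-- The projection onto a complete subalgebra `S`:
`π(b) = inf {a ∈ S : b ≤ a}`. -/
def proj [CompleteBooleanAlgebra B] (S : Set B) (b : B) : B :=
  sInf {a ∈ S | b ≤ a}

/-- The amalgamation `Am(B,φ₀)` of `B` over an isomorphism `φ₀ : B₁ → B₂`:
the set of pairs `(b',b'') ∈ B × B` with `φ₀(π₁(b')) ⊓ π₂(b'') ≠ ⊥`,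
with the product order. -/
def Amal [CompleteBooleanAlgebra B] (S₁ S₂ : Set B) (φ : B → B) :
    Set (B × B) :=
  {c | φ (proj S₁ c.1) ⊓ proj S₂ c.2 ≠ ⊥}

/-- Compatibility in the amalgamation: a common extension inside `Am`. -/
def AmalCompat [CompleteBooleanAlgebra B] (Am : Set (B × B)) (c d : B × B) :
    Prop :=
  ∃ e ∈ Am, e ≤ c ∧ e ≤ d

/-- `φ` restricts to an isomorphism of `S₁` onto `S₂`. -/
def IsSubalgIso [CompleteBooleanAlgebra B] (S₁ S₂ : Set B) (φ : B → B) :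
    Prop :=
  φ '' S₁ = S₂ ∧ (∀ a ∈ S₁, ∀ b ∈ S₁, (φ a ≤ φ b ↔ a ≤ b))

section Development

variable [CompleteBooleanAlgebra B] {S S₁ S₂ : Set B} {φ : B → B}

namespace IsCompleteSubalgebra

theorem iSup_mem (h : IsCompleteSubalgebra S) {ι : Sort*} {f : ι → B} (hf : ∀ i, f i ∈ S) :
    ⨆ i, f i ∈ S :=
  h.1 _ (range_subset_iff.2 hf)

theorem bot_mem (h : IsCompleteSubalgebra S) : (⊥ : B) ∈ S := by
  simpa using h.1 ∅ (empty_subset S)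

theorem top_mem (h : IsCompleteSubalgebra S) : (⊤ : B) ∈ S := by
  simpa using h.2 ⊥ h.bot_mem

theorem sInf_mem (h : IsCompleteSubalgebra S) {T : Set B} (hT : T ⊆ S) : sInf T ∈ S := by
  have hcompl : sSup (compl '' T) ∈ S := h.1 _ (image_subset_iff.2 fun t ht => h.2 t (hT ht))
  simpa [compl_sSup', compl_compl_image] using h.2 _ hcompl

end IsCompleteSubalgebra

section Projection

theorem le_proj (b : B) : b ≤ proj S b :=
  le_sInf fun _ ha => ha.2

theorem proj_le {a b : B} (ha : a ∈ S) (hba : b ≤ a) : proj S b ≤ a :=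
  sInf_le ⟨ha, hba⟩

theorem proj_mem (h : IsCompleteSubalgebra S) (b : B) : proj S b ∈ S :=
  h.sInf_mem (sep_subset _ _)

theorem proj_mono (h : IsCompleteSubalgebra S) : Monotone (proj S) :=
  fun _ c hbc => proj_le (proj_mem h c) (hbc.trans (le_proj c))

theorem proj_top : proj S (⊤ : B) = ⊤ :=
  top_unique (le_proj ⊤)

theorem proj_eq_bot_iff (h : IsCompleteSubalgebra S) {b : B} : proj S b = ⊥ ↔ b = ⊥ := by
  refine ⟨fun hb => le_bot_iff.1 (hb ▸ le_proj b), ?_⟩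
  rintro rfl
  exact le_bot_iff.1 (proj_le h.bot_mem le_rfl)

theorem proj_iSup (h : IsCompleteSubalgebra S) {ι : Sort*} (f : ι → B) :
    proj S (⨆ i, f i) = ⨆ i, proj S (f i) :=
  le_antisymm
    (proj_le (h.iSup_mem fun i => proj_mem h (f i)) (iSup_mono fun i => le_proj (f i)))
    (iSup_le fun i => proj_mono h (le_iSup f i))

end Projection

namespace IsSubalgIso

theorem map_mem (hφ : IsSubalgIso S₁ S₂ φ) {a : B} (ha : a ∈ S₁) : φ a ∈ S₂ :=
  hφ.1 ▸ mem_image_of_mem φ ha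

theorem map_iSup (h₁ : IsCompleteSubalgebra S₁) (h₂ : IsCompleteSubalgebra S₂)
    (hφ : IsSubalgIso S₁ S₂ φ) {ι : Sort*} {f : ι → B} (hf : ∀ i, f i ∈ S₁) :
    φ (⨆ i, f i) = ⨆ i, φ (f i) := by
  have hsup : ⨆ i, f i ∈ S₁ := h₁.iSup_mem hf
  obtain ⟨u, hu, hφu⟩ : ⨆ i, φ (f i) ∈ φ '' S₁ :=
    hφ.1 ▸ h₂.iSup_mem fun i => hφ.map_mem (hf i)
  refine le_antisymm ?_ (iSup_le fun i => (hφ.2 _ (hf i) _ hsup).2 (le_iSup f i))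
  rw [← hφu]
  exact (hφ.2 _ hsup u hu).2 <| iSup_le fun i =>
    (hφ.2 _ (hf i) u hu).1 ((le_iSup (fun j => φ (f j)) i).trans hφu.ge)

theorem map_bot (h₁ : IsCompleteSubalgebra S₁) (h₂ : IsCompleteSubalgebra S₂)
    (hφ : IsSubalgIso S₁ S₂ φ) : φ ⊥ = ⊥ := by
  obtain ⟨u, hu, hφu⟩ : ⊥ ∈ φ '' S₁ := hφ.1 ▸ h₂.bot_mem
  exact le_bot_iff.1 (hφu ▸ (hφ.2 ⊥ h₁.bot_mem u hu).2 bot_le)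

theorem map_top (h₁ : IsCompleteSubalgebra S₁) (h₂ : IsCompleteSubalgebra S₂)
    (hφ : IsSubalgIso S₁ S₂ φ) : φ ⊤ = ⊤ := by
  obtain ⟨u, hu, hφu⟩ : ⊤ ∈ φ '' S₁ := hφ.1 ▸ h₂.top_mem
  exact top_unique (hφu ▸ (hφ.2 u hu ⊤ h₁.top_mem).2 le_top)

theorem map_eq_bot_iff (h₁ : IsCompleteSubalgebra S₁) (h₂ : IsCompleteSubalgebra S₂)
    (hφ : IsSubalgIso S₁ S₂ φ) {a : B} (ha : a ∈ S₁) : φ a = ⊥ ↔ a = ⊥ := by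
  simpa only [hφ.map_bot h₁ h₂, le_bot_iff] using hφ.2 a ha ⊥ h₁.bot_mem

end IsSubalgIso

theorem sSup_eq_top_of_forall_inf_ne_bot {A : Set B}
    (hA : ∀ b : B, b ≠ ⊥ → ∃ a ∈ A, a ⊓ b ≠ ⊥) : sSup A = ⊤ := by
  by_contra hne
  obtain ⟨a, ha, hab⟩ := hA (sSup A)ᶜ (compl_eq_bot.not.2 hne)
  exact hab (disjoint_compl_right.mono_left (le_sSup ha)).eq_bot

namespace Amal

theorem fst_ne_bot (h₁ : IsCompleteSubalgebra S₁) (h₂ : IsCompleteSubalgebra S₂)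
    (hφ : IsSubalgIso S₁ S₂ φ) {c : B × B} (hc : c ∈ Amal S₁ S₂ φ) : c.1 ≠ ⊥ := by
  intro hc₁
  apply hc
  rw [hc₁, (proj_eq_bot_iff h₁).2 rfl, hφ.map_bot h₁ h₂, bot_inf_eq]

theorem snd_ne_bot (h₂ : IsCompleteSubalgebra S₂) {c : B × B} (hc : c ∈ Amal S₁ S₂ φ) :
    c.2 ≠ ⊥ := by
  intro hc₂
  apply hc
  rw [hc₂, (proj_eq_bot_iff h₂).2 rfl, inf_bot_eq]

theorem mk_top_mem (h₁ : IsCompleteSubalgebra S₁) (h₂ : IsCompleteSubalgebra S₂)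
    (hφ : IsSubalgIso S₁ S₂ φ) {b : B} (hb : b ≠ ⊥) : (b, ⊤) ∈ Amal S₁ S₂ φ := by
  change φ (proj S₁ b) ⊓ proj S₂ ⊤ ≠ ⊥
  rw [proj_top, inf_top_eq, Ne, hφ.map_eq_bot_iff h₁ h₂ (proj_mem h₁ b), proj_eq_bot_iff h₁]
  exact hb

theorem top_mk_mem (h₁ : IsCompleteSubalgebra S₁) (h₂ : IsCompleteSubalgebra S₂)
    (hφ : IsSubalgIso S₁ S₂ φ) {b : B} (hb : b ≠ ⊥) : (⊤, b) ∈ Amal S₁ S₂ φ := by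
  change φ (proj S₁ ⊤) ⊓ proj S₂ b ≠ ⊥
  rw [proj_top, hφ.map_top h₁ h₂, top_inf_eq, Ne, proj_eq_bot_iff h₂]
  exact hb

theorem inf_ne_bot_iff_compat_mk_top (h₁ : IsCompleteSubalgebra S₁)
    (h₂ : IsCompleteSubalgebra S₂) (hφ : IsSubalgIso S₁ S₂ φ) (b b' : B) :
    b ⊓ b' ≠ ⊥ ↔ AmalCompat (Amal S₁ S₂ φ) (b, ⊤) (b', ⊤) := by
  refine ⟨fun h => ⟨_, mk_top_mem h₁ h₂ hφ h, ⟨inf_le_left, le_rfl⟩, ⟨inf_le_right, le_rfl⟩⟩,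
    ?_⟩
  rintro ⟨c, hc, hcb, hcb'⟩
  exact ne_bot_of_le_ne_bot (fst_ne_bot h₁ h₂ hφ hc) (le_inf hcb.1 hcb'.1)

theorem inf_ne_bot_iff_compat_top_mk (h₁ : IsCompleteSubalgebra S₁)
    (h₂ : IsCompleteSubalgebra S₂) (hφ : IsSubalgIso S₁ S₂ φ) (b b' : B) :
    b ⊓ b' ≠ ⊥ ↔ AmalCompat (Amal S₁ S₂ φ) (⊤, b) (⊤, b') := by
  refine ⟨fun h => ⟨_, top_mk_mem h₁ h₂ hφ h, ⟨le_rfl, inf_le_left⟩, ⟨le_rfl, inf_le_right⟩⟩,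
    ?_⟩
  rintro ⟨c, hc, hcb, hcb'⟩
  exact ne_bot_of_le_ne_bot (snd_ne_bot h₂ hc) (le_inf hcb.2 hcb'.2)

theorem exists_inf_fst_mem (h₁ : IsCompleteSubalgebra S₁) (h₂ : IsCompleteSubalgebra S₂)
    (hφ : IsSubalgIso S₁ S₂ φ) {ι : Sort*} {f : ι → B} (hf : ⨆ i, f i = ⊤) {c : B × B}
    (hc : c ∈ Amal S₁ S₂ φ) : ∃ i, (c.1 ⊓ f i, c.2) ∈ Amal S₁ S₂ φ := by
  have hsplit :
      φ (proj S₁ c.1) ⊓ proj S₂ c.2 = ⨆ i, φ (proj S₁ (c.1 ⊓ f i)) ⊓ proj S₂ c.2 := by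
    conv_lhs => rw [← inf_top_eq c.1, ← hf, inf_iSup_eq, proj_iSup h₁,
      hφ.map_iSup h₁ h₂ fun i => proj_mem h₁ _, iSup_inf_eq]
  by_contra! hnone
  exact hc (hsplit.trans (iSup_eq_bot.2 fun i => not_not.1 (hnone i)))

theorem exists_inf_snd_mem (h₂ : IsCompleteSubalgebra S₂) {ι : Sort*} {f : ι → B}
    (hf : ⨆ i, f i = ⊤) {c : B × B} (hc : c ∈ Amal S₁ S₂ φ) :
    ∃ i, (c.1, c.2 ⊓ f i) ∈ Amal S₁ S₂ φ := by
  have hsplit :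
      φ (proj S₁ c.1) ⊓ proj S₂ c.2 = ⨆ i, φ (proj S₁ c.1) ⊓ proj S₂ (c.2 ⊓ f i) := by
    conv_lhs => rw [← inf_top_eq c.2, ← hf, inf_iSup_eq, proj_iSup h₂, inf_iSup_eq]
  by_contra! hnone
  exact hc (hsplit.trans (iSup_eq_bot.2 fun i => not_not.1 (hnone i)))

end Amal

end Development

/-- The maps `e₁(b) = (b,1)` and `e₂(b) = (1,b)` are complete embeddings of
(the nonzero part of) `B` into the amalgamation `Am(B,φ₀)`: they send nonzero
elements to conditions, preserve order, preserve compatibility and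
incompatibility, and send maximal antichains to predense sets. -/
theorem amalgamation_complete_embeddings
    [CompleteBooleanAlgebra B] (S₁ S₂ : Set B)
    (hS₁ : IsCompleteSubalgebra S₁) (hS₂ : IsCompleteSubalgebra S₂)
    (φ : B → B) (hφ : IsSubalgIso S₁ S₂ φ) :
    let Am := Amal S₁ S₂ φ
    let e₁ : B → B × B := fun b => (b, ⊤)
    let e₂ : B → B × B := fun b => (⊤, b)
    (∀ b : B, b ≠ ⊥ → e₁ b ∈ Am ∧ e₂ b ∈ Am) ∧
    (∀ b b' : B, b' ≤ b → e₁ b' ≤ e₁ b ∧ e₂ b' ≤ e₂ b) ∧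
    (∀ b b' : B, b ≠ ⊥ → b' ≠ ⊥ →
      ((b ⊓ b' ≠ ⊥ ↔ AmalCompat Am (e₁ b) (e₁ b')) ∧
       (b ⊓ b' ≠ ⊥ ↔ AmalCompat Am (e₂ b) (e₂ b')))) ∧
    (∀ A : Set B, (∀ a ∈ A, a ≠ ⊥) →
      (∀ a ∈ A, ∀ a' ∈ A, a ≠ a' → a ⊓ a' = ⊥) →
      (∀ b : B, b ≠ ⊥ → ∃ a ∈ A, a ⊓ b ≠ ⊥) →
      (∀ d ∈ Am, ∃ a ∈ A, AmalCompat Am d (e₁ a)) ∧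
      (∀ d ∈ Am, ∃ a ∈ A, AmalCompat Am d (e₂ a))) := by
  intro Am e₁ e₂
  refine ⟨fun b hb => ⟨Amal.mk_top_mem hS₁ hS₂ hφ hb, Amal.top_mk_mem hS₁ hS₂ hφ hb⟩,
    fun b b' h => ⟨⟨h, le_rfl⟩, ⟨le_rfl, h⟩⟩,
    fun b b' _ _ => ⟨Amal.inf_ne_bot_iff_compat_mk_top hS₁ hS₂ hφ b b',
      Amal.inf_ne_bot_iff_compat_top_mk hS₁ hS₂ hφ b b'⟩, fun A _ _ hmax => ?_⟩
  have hA : ⨆ a : A, (a : B) = ⊤ := sSup_eq_iSup' A ▸ sSup_eq_top_of_forall_inf_ne_bot hmax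
  constructor
  · intro d hd
    obtain ⟨a, ha⟩ := Amal.exists_inf_fst_mem hS₁ hS₂ hφ hA hd
    exact ⟨a, a.2, _, ha, ⟨inf_le_left, le_rfl⟩, ⟨inf_le_right, le_top⟩⟩
  · intro d hd
    obtain ⟨a, ha⟩ := Amal.exists_inf_snd_mem hS₂ hA hd
    exact ⟨a, a.2, _, ha, ⟨le_rfl, inf_le_left⟩, ⟨le_top, inf_le_right⟩⟩
end
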